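/- arXiv:1805.10984 — 8 statements merged into one kernel-verified Lean document; each statement's English description precedes it below -/
import Mathlib

section
/- Let G be a graph on n vertices and let p(G;i) denote the number of power dominating sets of G of cardinality i. If p(G;i) = C(n,i) for some i ∈ [n], then p(G;j) = C(n,j) for all j with i ≤ j ≤ n. -/
open Finset Polynomial

/-- A set `T` is closed under the zero forcing rule: whenever `v ∈ T` has exactly one
neighbor outside `T`, that neighbor is in `T`. -/
def SimpleGraph.ForceClosed {V : Type*} (G : SimpleGraph V) (T : Set V) : Prop :=
  ∀ v ∈ T, ∀ w : V, G.neighborSet v \ T = {w} → w ∈ T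

/-- `S` is a zero forcing set: starting from `S` and applying the forcing rule repeatedly
colors every vertex, i.e. every force-closed superset of `S` is everything. -/
def SimpleGraph.IsZeroForcingSet {V : Type*} (G : SimpleGraph V) (S : Set V) : Prop :=
  ∀ T : Set V, S ⊆ T → G.ForceClosed T → T = Set.univ

/-- The closed neighborhood `N[S]` of a set of vertices. -/
def SimpleGraph.closedNbhd {V : Type*} (G : SimpleGraph V) (S : Set V) : Set V :=
  S ∪ {v | ∃ u ∈ S, G.Adj u v}

/-- `S` is a power dominating set: first color `N[S]` (domination step), then the
forcing process colors every vertex. -/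
def SimpleGraph.IsPowerDomSet {V : Type*} (G : SimpleGraph V) (S : Set V) : Prop :=
  G.IsZeroForcingSet (G.closedNbhd S)

/-- `S` is a dominating set. -/
def SimpleGraph.IsDomSet {V : Type*} (G : SimpleGraph V) (S : Set V) : Prop :=
  G.closedNbhd S = Set.univ

/-- `p(G;i)`: the number of power dominating sets of `G` of cardinality `i`. -/
noncomputable def pdCount {V : Type*} [Fintype V] (G : SimpleGraph V) (i : ℕ) : ℕ :=
  Nat.card {S : Finset V // G.IsPowerDomSet ↑S ∧ S.card = i}

/-- The power domination polynomial `𝒫(G;x) = ∑_{i=1}^n p(G;i) xⁱ`. -/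
noncomputable def pdPoly {V : Type*} [Fintype V] (G : SimpleGraph V) : Polynomial ℤ :=
  ∑ i ∈ Finset.Icc 1 (Fintype.card V), Polynomial.C (pdCount G i : ℤ) * Polynomial.X ^ i

lemma pds_mono {V : Type*} (G : SimpleGraph V) {S S' : Set V} (hss : S ⊆ S')
    (h : G.IsPowerDomSet S) : G.IsPowerDomSet S' := by
  intro T hT hTc
  apply h T _ hTc
  refine le_trans ?_ hT
  rintro x (hx | ⟨u, hu, hadj⟩)
  · exact Or.inl (hss hx)
  · exact Or.inr ⟨u, hss hu, hadj⟩

open scoped Classical in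
lemma pdCount_eq {V : Type*} [Fintype V] (G : SimpleGraph V) (k : ℕ) :
    pdCount G k
      = (Finset.univ.filter
          (fun S : Finset V => G.IsPowerDomSet ↑S ∧ S.card = k)).card := by
  rw [pdCount, Nat.card_eq_fintype_card, Fintype.card_subtype]

theorem stmt1 {V : Type*} [Fintype V] (G : SimpleGraph V) (i : ℕ)
    (hi1 : 1 ≤ i) (hin : i ≤ Fintype.card V)
    (h : pdCount G i = (Fintype.card V).choose i) :
    ∀ j : ℕ, i ≤ j → j ≤ Fintype.card V → pdCount G j = (Fintype.card V).choose j := by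
  classical
  have hall : ∀ S : Finset V, S.card = i → G.IsPowerDomSet ↑S := by
    intro S hS
    by_contra hnot
    have hsub : (Finset.univ.filter
          (fun S : Finset V => G.IsPowerDomSet ↑S ∧ S.card = i))
        ⊆ (Finset.univ.filter (fun S : Finset V => S.card = i)) := by
      intro T hT
      simp only [Finset.mem_filter] at hT ⊢
      exact ⟨hT.1, hT.2.2⟩
    have hcard2 : (Finset.univ.filter (fun S : Finset V => S.card = i)).card
        = (Fintype.card V).choose i := by
      rw [← Fintype.card_subtype, Fintype.card_finset_len]
    have heq : (Finset.univ.filter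
          (fun S : Finset V => G.IsPowerDomSet ↑S ∧ S.card = i))
        = (Finset.univ.filter (fun S : Finset V => S.card = i)) := by
      apply Finset.eq_of_subset_of_card_le hsub
      rw [hcard2, ← h, pdCount_eq]
    have hmem : S ∈ Finset.univ.filter
        (fun S : Finset V => G.IsPowerDomSet ↑S ∧ S.card = i) := by
      rw [heq]; simp [hS]
    simp only [Finset.mem_filter] at hmem
    exact hnot hmem.2.1
  intro j hij hjn
  have hallj : ∀ S : Finset V, S.card = j → G.IsPowerDomSet ↑S := by
    intro S hS
    obtain ⟨t, hts, htc⟩ := Finset.exists_subset_card_eq (hS ▸ hij)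
    exact pds_mono G (by exact_mod_cast hts) (hall t htc)
  rw [pdCount_eq]
  have heq2 : (Finset.univ.filter
        (fun S : Finset V => G.IsPowerDomSet ↑S ∧ S.card = j))
      = (Finset.univ.filter (fun S : Finset V => S.card = j)) := by
    apply Finset.filter_congr
    intro S _
    exact ⟨fun h => h.2, fun h => ⟨hallj S h, h⟩⟩
  rw [heq2, ← Fintype.card_subtype, Fintype.card_finset_len]
end

section
/- For any graph G on n vertices, p(G;i) ≤ p(G;i+1) for all integers i with 1 ≤ i < n/2, where p(G;i) is the number of power dominating sets of G of size i. -/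
open Finset Polynomial

/-!
Power domination is monotone, so the power dominating sets of size `i` form a family whose
upper shadow consists of power dominating sets of size `i + 1`. The upward local LYM
inequality `#𝒜 * (n - i) ≤ #∂⁺𝒜 * (i + 1)`, which is the downward one applied to
complements, shows that the upper shadow is at least as large as the family when `2i < n`.
-/

namespace Finset

variable {α : Type*} [DecidableEq α] [Fintype α] {𝒜 : Finset (Finset α)} {r : ℕ}

open scoped FinsetFamily

theorem card_mul_le_card_upShadow_mul (h𝒜 : (𝒜 : Set (Finset α)).Sized r) :
    #𝒜 * (Fintype.card α - r) ≤ #(∂⁺ 𝒜) * (r + 1) := by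
  rcases le_or_gt r (Fintype.card α) with hr | hr
  · have := local_lubell_yamamoto_meshalkin_inequality_mul h𝒜.compls
    rwa [shadow_compls, card_compls, card_compls, Nat.sub_sub_self hr] at this
  · simp [Nat.sub_eq_zero_of_le hr.le]

theorem card_le_card_upShadow (h𝒜 : (𝒜 : Set (Finset α)).Sized r)
    (hr : 2 * r < Fintype.card α) : #𝒜 ≤ #(∂⁺ 𝒜) :=
  Nat.le_of_mul_le_mul_right
    ((Nat.mul_le_mul_left _ (by omega : r + 1 ≤ Fintype.card α - r)).trans
      (card_mul_le_card_upShadow_mul h𝒜))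
    r.succ_pos

theorem upShadow_filter_powersetCard_subset {P : Finset α → Prop} [DecidablePred P]
    (hP : Monotone P) :
    ∂⁺ ((powersetCard r univ).filter P) ⊆ (powersetCard (r + 1) univ).filter P := by
  intro t ht
  obtain ⟨s, hs, a, ha, rfl⟩ := mem_upShadow_iff.1 ht
  simp only [mem_filter, mem_powersetCard_univ] at hs ⊢
  exact ⟨by rw [card_insert_of_notMem ha, hs.1], hP (subset_insert a s) hs.2⟩

theorem card_filter_powersetCard_le_succ {P : Finset α → Prop} [DecidablePred P]
    (hP : Monotone P) (hr : 2 * r < Fintype.card α) :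
    #((powersetCard r univ).filter P) ≤ #((powersetCard (r + 1) univ).filter P) :=
  (card_le_card_upShadow (fun _ hs => (mem_powersetCard_univ.1 (mem_filter.1 hs).1)) hr).trans
    (card_le_card (upShadow_filter_powersetCard_subset hP))

end Finset

namespace SimpleGraph

variable {V : Type*} (G : SimpleGraph V)

theorem closedNbhd_mono : Monotone G.closedNbhd :=
  fun _ _ hST => Set.union_subset_union hST fun _ ⟨u, hu, hadj⟩ => ⟨u, hST hu, hadj⟩

theorem isZeroForcingSet_mono : Monotone G.IsZeroForcingSet :=
  fun _ _ hST hS T hT => hS T (hST.trans hT)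

theorem isPowerDomSet_mono : Monotone G.IsPowerDomSet :=
  G.isZeroForcingSet_mono.comp G.closedNbhd_mono

open scoped Classical in
theorem pdCount_eq_card_filter_powersetCard [Fintype V] (i : ℕ) :
    pdCount G i = #((powersetCard i univ).filter fun S : Finset V => G.IsPowerDomSet ↑S) := by
  rw [pdCount, Nat.card_eq_fintype_card, Fintype.card_subtype]
  congr 1
  ext S
  simp [and_comm]

end SimpleGraph

theorem stmt2_general {V : Type*} [Fintype V] (G : SimpleGraph V) (i : ℕ)
    (hi2 : 2 * i < Fintype.card V) :
    pdCount G i ≤ pdCount G (i + 1) := by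
  classical
  rw [G.pdCount_eq_card_filter_powersetCard, G.pdCount_eq_card_filter_powersetCard]
  exact card_filter_powersetCard_le_succ (G.isPowerDomSet_mono.comp fun _ _ => coe_subset.2) hi2

theorem stmt2 {V : Type*} [Fintype V] (G : SimpleGraph V) (i : ℕ)
    (hi1 : 1 ≤ i) (hi2 : 2 * i < Fintype.card V) :
    pdCount G i ≤ pdCount G (i + 1) :=
  stmt2_general G i hi2
end

section
/- For a graph G = (V,E) on n vertices and any k with 0 ≤ k ≤ n−1, the number of power dominating sets of size n−k equals the number of sets S ⊆ V with |S| = k such that S ∩ N(V∖S) is a zero forcing set of the induced subgraph G[S]. -/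
open Finset Polynomial

lemma key {V : Type*} [Fintype V] [DecidableEq V] (G : SimpleGraph V) (S : Finset V) :
    G.IsPowerDomSet ↑(Sᶜ) ↔
      (SimpleGraph.induce (↑S : Set V) G).IsZeroForcingSet
        {v : (↑S : Set V) | ∃ u : V, u ∉ S ∧ G.Adj u ↑v} := by
  have hmem : ∀ v : V, v ∈ G.closedNbhd ↑(Sᶜ) ↔ (v ∉ S ∨ ∃ u, u ∉ S ∧ G.Adj u v) := by
    intro v
    simp [SimpleGraph.closedNbhd, Set.mem_union]
  constructor
  · intro h T' hZ hF
    set T : Set V := {v | ∀ hv : v ∈ (↑S : Set V), (⟨v, hv⟩ : (↑S : Set V)) ∈ T'} with hTdef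
    have hsub : G.closedNbhd ↑(Sᶜ) ⊆ T := by
      intro v hv
      rcases (hmem v).1 hv with hv' | ⟨u, hu, hadj⟩
      · intro hvS; exact absurd hvS hv'
      · intro hvS; exact hZ ⟨u, hu, hadj⟩
    have hFC : G.ForceClosed T := by
      intro v hv w hw
      have hwmem : w ∈ G.neighborSet v \ T := by rw [hw]; rfl
      obtain ⟨hadj, hwT⟩ := hwmem
      intro hwS
      by_cases hvS : v ∈ S
      · -- v in S: use induced force-closedness
        have hvT' : (⟨v, hvS⟩ : (↑S : Set V)) ∈ T' := hv hvS
        have hnb : (SimpleGraph.induce (↑S : Set V) G).neighborSet ⟨v, hvS⟩ \ T'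
            = {(⟨w, hwS⟩ : (↑S : Set V))} := by
          ext ⟨x, hxS⟩
          simp only [Set.mem_diff, SimpleGraph.mem_neighborSet, Set.mem_singleton_iff,
            SimpleGraph.induce, SimpleGraph.comap_adj]
          constructor
          · rintro ⟨hax, hxT'⟩
            have hxT : x ∉ T := fun hxTT => hxT' (hxTT hxS)
            have : x ∈ G.neighborSet v \ T := ⟨hax, hxT⟩
            rw [hw] at this
            exact Subtype.ext this
          · intro hxw
            have hxw' : x = w := congrArg Subtype.val hxw
            subst hxw'
            refine ⟨hadj, fun hwT' => hwT fun h => ?_⟩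
            exact (by convert hwT' : (⟨x, h⟩ : (↑S : Set V)) ∈ T')
        have := hF ⟨v, hvS⟩ hvT' ⟨w, hwS⟩ hnb
        exact this
      · exact hZ ⟨v, hvS, hadj⟩
    have := h T hsub hFC
    ext ⟨x, hx⟩
    simp only [Set.mem_univ, iff_true]
    have : x ∈ T := this ▸ Set.mem_univ x
    exact this hx
  · intro h T hT hFC
    set T' : Set (↑S : Set V) := {v | ↑v ∈ T} with hT'def
    have hZ : {v : (↑S : Set V) | ∃ u : V, u ∉ S ∧ G.Adj u ↑v} ⊆ T' := by
      rintro v ⟨u, hu, hadj⟩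
      exact hT ((hmem ↑v).2 (Or.inr ⟨u, hu, hadj⟩))
    have hFC' : (SimpleGraph.induce (↑S : Set V) G).ForceClosed T' := by
      intro v hv w hw
      have hnb : G.neighborSet ↑v \ T = {↑w} := by
        ext x
        simp only [Set.mem_diff, SimpleGraph.mem_neighborSet, Set.mem_singleton_iff]
        constructor
        · rintro ⟨hax, hxT⟩
          have hxS : x ∈ S := by
            by_contra hxS
            exact hxT (hT ((hmem x).2 (Or.inl hxS)))
          have : (⟨x, hxS⟩ : (↑S : Set V)) ∈
              (SimpleGraph.induce (↑S : Set V) G).neighborSet v \ T' := ⟨hax, hxT⟩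
          rw [hw] at this
          exact congrArg Subtype.val this
        · intro hxw
          subst hxw
          have : w ∈
              (SimpleGraph.induce (↑S : Set V) G).neighborSet v \ T' := by
            rw [hw]; rfl
          exact this
      exact hFC ↑v hv ↑w hnb
    have huniv := h T' hZ hFC'
    ext x
    simp only [Set.mem_univ, iff_true]
    by_cases hxS : x ∈ S
    · have : (⟨x, hxS⟩ : (↑S : Set V)) ∈ T' := huniv ▸ Set.mem_univ _
      exact this
    · exact hT ((hmem x).2 (Or.inl hxS))

theorem stmt3 {V : Type*} [Fintype V] (G : SimpleGraph V) (k : ℕ)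
    (hk : k ≤ Fintype.card V - 1) :
    pdCount G (Fintype.card V - k) =
      Nat.card {S : Finset V // S.card = k ∧
        (SimpleGraph.induce (↑S : Set V) G).IsZeroForcingSet
          {v : (↑S : Set V) | ∃ u : V, u ∉ S ∧ G.Adj u ↑v} } := by
  classical
  have hkn : k ≤ Fintype.card V := le_trans hk (Nat.sub_le _ _)
  refine Nat.card_congr ?_
  refine
    { toFun := fun T => ⟨(T : Finset V)ᶜ, ?_, ?_⟩
      invFun := fun S => ⟨(S : Finset V)ᶜ, ?_, ?_⟩
      left_inv := fun T => Subtype.ext (compl_compl _)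
      right_inv := fun S => Subtype.ext (compl_compl _) }
  · rw [Finset.card_compl, T.2.2, Nat.sub_sub_self hkn]
  · have := (key G (T.1)ᶜ).1 (by rw [compl_compl]; exact T.2.1)
    exact this
  · have := (key G S.1).2 S.2.2
    exact this
  · rw [Finset.card_compl, S.2.1]
end

section
/- For any graph G on n vertices, the number of nonempty sets of the form N[F] for F a fort of G is at most 2ⁿ minus the total number of power dominating sets of G, i.e., |𝒩(G)| ≤ 2ⁿ − 𝒫(G;1), where 𝒫(G;1) = Σᵢ p(G;i). -/
open Finset Polynomial

/-- A fort: a nonempty set `F` such that no vertex outside `F` has exactly one neighbor in `F`. -/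
def SimpleGraph.IsFort {V : Type*} (G : SimpleGraph V) (F : Set V) : Prop :=
  F.Nonempty ∧ ∀ v ∉ F, ¬ ∃ w : V, G.neighborSet v ∩ F = {w}


/-!
For a fort `F`, the complement of `N[F]` is never power dominating: its closed neighbourhood
misses `F`, and `Fᶜ` is force-closed because no vertex outside `F` has exactly one neighbour in
`F`, so forcing stalls inside `Fᶜ ≠ V`. Hence `N ↦ Nᶜ` injects `𝒩(G)` into the sets that are
not power dominating, of which there are `2ⁿ` minus the number of power dominating sets, and
`𝒫(G;1)` counts only the nonempty ones.
-/

namespace SimpleGraph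

variable {V : Type*} (G : SimpleGraph V)

lemma closedNbhd_compl_closedNbhd_subset_compl (S : Set V) :
    G.closedNbhd (G.closedNbhd S)ᶜ ⊆ Sᶜ := by
  rintro v (hv | ⟨u, hu, huv⟩) hvS
  · exact hv (Or.inl hvS)
  · exact hu (Or.inr ⟨v, hvS, huv.symm⟩)

variable {G}

lemma IsFort.forceClosed_compl {F : Set V} (hF : G.IsFort F) : G.ForceClosed Fᶜ := by
  intro v hv w hw
  refine absurd ⟨w, ?_⟩ (hF.2 v hv)
  rw [← hw, Set.sdiff_compl]

lemma IsFort.not_isPowerDomSet_compl_closedNbhd {F : Set V} (hF : G.IsFort F) :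
    ¬ G.IsPowerDomSet (G.closedNbhd F)ᶜ := by
  intro hpd
  obtain ⟨x, hx⟩ := hF.1
  have hstall : Fᶜ = Set.univ :=
    hpd Fᶜ (G.closedNbhd_compl_closedNbhd_subset_compl F) hF.forceClosed_compl
  exact (hstall ▸ Set.mem_univ x : x ∈ Fᶜ) hx

end SimpleGraph

section Counting

open scoped Classical

variable {V : Type*} [Fintype V] (G : SimpleGraph V)

lemma pdCount_eq_card_filter (i : ℕ) :
    pdCount G i = #{S ∈ ({S | G.IsPowerDomSet ↑S} : Finset (Finset V)) | S.card = i} := by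
  rw [pdCount, Nat.card_eq_fintype_card, Fintype.card_subtype, filter_filter]

lemma sum_pdCount_le_card_isPowerDomSet (s : Finset ℕ) :
    ∑ i ∈ s, pdCount G i ≤ #({S | G.IsPowerDomSet ↑S} : Finset (Finset V)) := by
  simp only [pdCount_eq_card_filter]
  rw [sum_card_fiberwise_eq_card_filter]
  exact card_filter_le _ _

lemma card_fortClosedNbhd_le_card_not_isPowerDomSet :
    Nat.card {N : Set V // ∃ F : Set V, G.IsFort F ∧ N = G.closedNbhd F} ≤
      #({S | ¬ G.IsPowerDomSet ↑S} : Finset (Finset V)) := by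
  rw [Nat.card_eq_fintype_card, Fintype.card_subtype]
  refine card_le_card_of_injOn (fun N => Nᶜ.toFinset) ?_ ?_
  · rintro N hN
    obtain ⟨F, hF, rfl⟩ := (mem_filter.1 hN).2
    simpa using hF.not_isPowerDomSet_compl_closedNbhd
  · intro N₁ _ N₂ _ h
    exact compl_injective (Set.toFinset_inj.1 h)

end Counting

theorem stmt6 {V : Type*} [Fintype V] (G : SimpleGraph V) :
    Nat.card {N : Set V // ∃ F : Set V, G.IsFort F ∧ N = G.closedNbhd F} ≤
      2 ^ (Fintype.card V) - ∑ i ∈ Finset.Icc 1 (Fintype.card V), pdCount G i := by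
  classical
  have hsplit := card_filter_add_card_filter_not (s := (univ : Finset (Finset V)))
    (fun S => G.IsPowerDomSet ↑S)
  rw [card_univ, Fintype.card_finset] at hsplit
  have hforts := card_fortClosedNbhd_le_card_not_isPowerDomSet G
  have hpd := sum_pdCount_le_card_isPowerDomSet G (Icc 1 (Fintype.card V))
  omega
end

section
/- A set S of vertices of a graph G is a power dominating set of G if and only if S intersects the closed neighborhood N[F] of every fort F of G. -/
open Finset Polynomial

theorem stmt7 {V : Type*} [Fintype V] (G : SimpleGraph V) (S : Set V) :
    G.IsPowerDomSet S ↔ ∀ F : Set V, G.IsFort F → (S ∩ G.closedNbhd F).Nonempty := by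
  constructor
  · intro hpd F hF
    by_contra hne
    rw [Set.not_nonempty_iff_eq_empty, Set.eq_empty_iff_forall_notMem] at hne
    have hsub : G.closedNbhd S ⊆ Fᶜ := by
      rintro v (hv | ⟨u, hu, huv⟩) hvF
      · exact hne v ⟨hv, Or.inl hvF⟩
      · exact hne u ⟨hu, Or.inr ⟨v, hvF, huv.symm⟩⟩
    have hfc : G.ForceClosed Fᶜ := by
      intro v hv w hw
      exact absurd ⟨w, by rwa [Set.diff_compl] at hw⟩ (hF.2 v hv)
    have := hpd Fᶜ hsub hfc
    obtain ⟨x, hx⟩ := hF.1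
    have hxc : x ∈ Fᶜ := this ▸ Set.mem_univ x
    exact hxc hx
  · intro h T hT hfc
    by_contra hne
    have hF : G.IsFort Tᶜ := by
      constructor
      · rw [Set.nonempty_compl]; exact hne
      · rintro v hv ⟨w, hw⟩
        rw [← Set.diff_eq] at hw
        have hwm : w ∈ G.neighborSet v \ T := hw ▸ rfl
        exact hwm.2 (hfc v (not_not.mp hv) w hw)
    obtain ⟨x, hxS, hxN⟩ := h Tᶜ hF
    have hxT : x ∈ T := hT (Or.inl hxS)
    rcases hxN with hx | ⟨u, hu, hux⟩
    · exact hx hxT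
    · exact hu (hT (Or.inr ⟨x, hxS, hux.symm⟩))
end

section
/- For a graph G, every power dominating set of G is a zero forcing set of G (equivalently, the power domination polynomial equals the zero forcing polynomial) if and only if every connected component of G is a path on at most 2 vertices. -/
open Finset Polynomial

section Aux

variable {V : Type*} {G : SimpleGraph V}

lemma aux_zf_to_pd {S : Set V} (h : G.IsZeroForcingSet S) : G.IsPowerDomSet S := by
  intro T hsub hT
  exact h T (fun x hx => hsub (Set.mem_union_left _ hx)) hT

lemma aux_forceClosed_of_adjClosed {T : Set V}
    (h : ∀ v ∈ T, ∀ w, G.Adj v w → w ∈ T) : G.ForceClosed T := by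
  intro v hv w hw
  have hmem : w ∈ G.neighborSet v \ T := by rw [hw]; exact rfl
  exact absurd (h v hv w hmem.1) hmem.2

lemma aux_mem_supp_of_adj {c : G.ConnectedComponent} {u w : V} (hu : u ∈ c.supp)
    (h : G.Adj u w) : w ∈ c.supp := by
  rw [SimpleGraph.ConnectedComponent.mem_supp_iff] at hu ⊢
  rw [← hu]
  exact SimpleGraph.ConnectedComponent.sound h.symm.reachable

lemma aux_reachable_of_mem_supp {c : G.ConnectedComponent} {u w : V} (hu : u ∈ c.supp)
    (hw : w ∈ c.supp) : G.Reachable u w := by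
  rw [SimpleGraph.ConnectedComponent.mem_supp_iff] at hu hw
  exact SimpleGraph.ConnectedComponent.exact (hu.trans hw.symm)

lemma aux_crossing {T : Set V} : ∀ {s z : V}, G.Walk s z → s ∈ T → z ∉ T →
    ∃ u w, u ∈ T ∧ w ∉ T ∧ G.Adj u w := by
  intro s z p
  induction p with
  | nil => intro h1 h2; exact absurd h1 h2
  | @cons u m z' h q ih =>
    intro hs hz
    by_cases hm : m ∈ T
    · exact ih hm hz
    · exact ⟨u, m, hs, hm, h⟩

lemma aux_walk_stay {x y : V} (hx : ∀ a, G.Adj x a → a = y) (hy : ∀ a, G.Adj y a → a = x) :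
    ∀ {u z : V}, G.Walk u z → (u = x ∨ u = y) → (z = x ∨ z = y) := by
  intro u z p
  induction p with
  | nil => exact id
  | @cons u' m z' h q ih =>
    rintro (rfl | rfl)
    · exact ih (Or.inr (hx _ h))
    · exact ih (Or.inl (hy _ h))

lemma aux_exists_two_nbrs (c : G.ConnectedComponent) (hc : 3 ≤ c.supp.ncard) :
    ∃ v ∈ c.supp, ∃ a b, a ≠ b ∧ G.Adj v a ∧ G.Adj v b := by
  by_contra hcon
  have hcon' : ∀ v ∈ c.supp, ∀ a b, G.Adj v a → G.Adj v b → a = b := by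
    intro v hv a b ha hb
    by_contra hne
    exact hcon ⟨v, hv, a, b, hne, ha, hb⟩
  obtain ⟨x, hx⟩ : c.supp.Nonempty := by
    apply Set.nonempty_of_ncard_ne_zero; omega
  obtain ⟨z, hz, hzx⟩ := Set.exists_ne_of_one_lt_ncard (by omega : 1 < c.supp.ncard) x
  obtain ⟨p⟩ := aux_reachable_of_mem_supp hx hz
  cases p with
  | nil => exact hzx rfl
  | @cons _ y _ h q =>
    have hy : y ∈ c.supp := aux_mem_supp_of_adj hx h
    have hxn : ∀ a, G.Adj x a → a = y := fun a ha => hcon' x hx a y ha h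
    have hyn : ∀ a, G.Adj y a → a = x := fun a ha => hcon' y hy a x ha h.symm
    have hsub : c.supp ⊆ {x, y} := by
      intro z' hz'
      obtain ⟨p'⟩ := aux_reachable_of_mem_supp hx hz'
      rcases aux_walk_stay hxn hyn p' (Or.inl rfl) with rfl | rfl
      · exact Set.mem_insert _ _
      · exact Set.mem_insert_of_mem _ rfl
    have : c.supp.ncard ≤ 2 := by
      calc c.supp.ncard ≤ ({x, y} : Set V).ncard := Set.ncard_le_ncard hsub (Set.toFinite _)
        _ ≤ ({y} : Set V).ncard + 1 := Set.ncard_insert_le _ _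
        _ ≤ 2 := by rw [Set.ncard_singleton]
    omega

end Aux

theorem stmt10 {V : Type*} [Fintype V] (G : SimpleGraph V) :
    (∀ S : Set V, G.IsPowerDomSet S ↔ G.IsZeroForcingSet S) ↔
      (∀ c : G.ConnectedComponent, Nat.card c.supp ≤ 2) := by
  classical
  constructor
  · intro hLHS
    by_contra hcon
    push_neg at hcon
    obtain ⟨c, hc⟩ := hcon
    rw [Nat.card_coe_set_eq] at hc
    have hc3 : 3 ≤ c.supp.ncard := hc
    obtain ⟨v, hv, a, b, hab, hva, hvb⟩ := aux_exists_two_nbrs c hc3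
    -- the family of candidate force-closed sets
    set P : Finset V → Prop := fun t =>
      G.ForceClosed ↑t ∧ (∀ x, x ∉ c.supp → x ∈ t) ∧ (∃ x ∈ c.supp, x ∈ t) ∧
        ∃ x ∈ c.supp, x ∉ t with hP
    set t0 : Finset V := Finset.univ.filter (fun x => x ∉ c.supp ∨ x = v) with ht0
    have hmem0 : ∀ x, x ∈ t0 ↔ (x ∉ c.supp ∨ x = v) := by
      intro x; simp [ht0]
    have hPt0 : P t0 := by
      refine ⟨?_, ?_, ⟨v, hv, (hmem0 v).2 (Or.inr rfl)⟩, ?_⟩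
      · intro u hu w hw
        have hmemw : w ∈ G.neighborSet u \ ↑t0 := by rw [hw]; exact rfl
        rcases (hmem0 u).1 hu with hu' | huv
        · -- u outside the component: all its neighbors are outside too
          by_cases hws : w ∈ c.supp
          · exact absurd (aux_mem_supp_of_adj hws hmemw.1.symm) hu'
          · exact (hmem0 w).2 (Or.inl hws)
        · -- u = v : v has two neighbors outside t0
          exfalso
          rw [← huv] at hva hvb hv
          have hnot : ∀ y, G.Adj u y → y ∈ c.supp → y ∉ (t0 : Set V) := by
            intro y hy hys hyt
            rcases (hmem0 y).1 hyt with h1 | h1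
            · exact h1 hys
            · rw [h1, ← huv] at hy
              exact hy.ne rfl
          have ha' : a ∈ G.neighborSet u \ ↑t0 :=
            ⟨hva, hnot a hva (aux_mem_supp_of_adj hv hva)⟩
          have hb' : b ∈ G.neighborSet u \ ↑t0 :=
            ⟨hvb, hnot b hvb (aux_mem_supp_of_adj hv hvb)⟩
          rw [hw] at ha' hb'
          exact hab (ha'.trans hb'.symm)
      · intro x hx
        exact (hmem0 x).2 (Or.inl hx)
      · obtain ⟨z, hz, hzv⟩ := Set.exists_ne_of_one_lt_ncard (by omega : 1 < c.supp.ncard) v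
        refine ⟨z, hz, ?_⟩
        intro hzt
        rcases (hmem0 z).1 hzt with h1 | h1
        · exact h1 hz
        · exact hzv h1
    -- a maximal element of the family
    have hFne : (Finset.univ.filter P).Nonempty :=
      ⟨t0, Finset.mem_filter.2 ⟨Finset.mem_univ _, hPt0⟩⟩
    obtain ⟨T, hTF, hTmax⟩ := Finset.exists_max_image (Finset.univ.filter P) Finset.card hFne
    have hPT : P T := (Finset.mem_filter.1 hTF).2
    obtain ⟨hTfc, hTout, ⟨s, hsc, hsT⟩, ⟨z0, hz0c, hz0T⟩⟩ := hPT
    -- T is not a zero forcing set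
    have hnzf : ¬ G.IsZeroForcingSet ↑T := by
      intro hzf
      have huniv : (↑T : Set V) = Set.univ := hzf ↑T subset_rfl hTfc
      have h2 : z0 ∈ (↑T : Set V) := by rw [huniv]; trivial
      exact hz0T (Finset.mem_coe.1 h2)
    -- T is a power dominating set
    have hpd : G.IsPowerDomSet ↑T := by
      intro T' hsub hfc
      by_contra hne
      obtain ⟨x, hx⟩ := (Set.ne_univ_iff_exists_notMem T').1 hne
      have hTsub : (↑T : Set V) ⊆ T' := fun y hy => hsub (Set.mem_union_left _ hy)
      have hxc : x ∈ c.supp := by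
        by_contra hxc
        exact hx (hTsub (hTout x hxc))
      have hxT : x ∉ (T : Set V) := fun h => hx (hTsub h)
      -- there is an edge crossing out of T within the component
      obtain ⟨p⟩ := aux_reachable_of_mem_supp hsc hxc
      obtain ⟨u, w, huT, hwT, huw⟩ := aux_crossing (T := (↑T : Set V)) p hsT hxT
      have hwT' : w ∈ T' := hsub (Set.mem_union_right _ ⟨u, huT, huw⟩)
      -- the finset version of T' is a strictly bigger member of the family
      set t' : Finset V := Finset.univ.filter (· ∈ T') with ht'
      have hmem' : ∀ y, y ∈ t' ↔ y ∈ T' := by intro y; simp [ht']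
      have hcoe' : (↑t' : Set V) = T' := by ext y; simp [ht']
      have hPt' : P t' := by
        refine ⟨by rw [hcoe']; exact hfc, ?_, ⟨s, hsc, (hmem' s).2 (hTsub hsT)⟩,
          ⟨x, hxc, fun h => hx ((hmem' x).1 h)⟩⟩
        intro y hy
        exact (hmem' y).2 (hTsub (hTout y hy))
      have hss : T ⊂ t' := by
        have hsub' : T ⊆ t' := fun y hy => (hmem' y).2 (hTsub (Finset.mem_coe.2 hy))
        refine (Finset.ssubset_iff_of_subset hsub').2 ⟨w, (hmem' w).2 hwT', ?_⟩
        intro h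
        exact hwT (Finset.mem_coe.2 h)
      have := hTmax t' (Finset.mem_filter.2 ⟨Finset.mem_univ _, hPt'⟩)
      exact absurd (Finset.card_lt_card hss) (by omega)
    exact hnzf ((hLHS ↑T).1 hpd)
  · intro hcomp S
    refine ⟨fun hPD => ?_, aux_zf_to_pd⟩
    intro T hST hT
    have hreach : ∀ x : V, ∃ s ∈ S, G.Reachable s x := by
      intro x
      have hU := hPD {y | ∃ s ∈ S, G.Reachable s y}
        (by
          rintro y (hy | ⟨u, hu, hadj⟩)
          · exact ⟨y, hy, SimpleGraph.Reachable.refl y⟩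
          · exact ⟨u, hu, hadj.reachable⟩)
        (by
          apply aux_forceClosed_of_adjClosed
          rintro y ⟨s, hs, hr⟩ w hadj
          exact ⟨s, hs, hr.trans hadj.reachable⟩)
      have : x ∈ (Set.univ : Set V) := Set.mem_univ x
      rw [← hU] at this
      exact this
    ext x
    simp only [Set.mem_univ, iff_true]
    obtain ⟨s, hs, hr⟩ := hreach x
    have hsT : s ∈ T := hST hs
    by_cases hxs : x = s
    · rw [hxs]; exact hsT
    by_contra hxT
    set c := G.connectedComponentMk s with hcdef
    have hsc : s ∈ c.supp := rfl
    have hxc : x ∈ c.supp := by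
      rw [SimpleGraph.ConnectedComponent.mem_supp_iff]
      exact SimpleGraph.ConnectedComponent.sound hr.symm
    have hcard : c.supp.ncard ≤ 2 := by
      have := hcomp c
      rwa [Nat.card_coe_set_eq] at this
    have hsupp : ({s, x} : Set V) = c.supp := by
      apply Set.eq_of_subset_of_ncard_le
      · rintro y (rfl | rfl)
        · exact hsc
        · exact hxc
      · rw [Set.ncard_pair (fun h => hxs h.symm)]
        exact hcard
      · exact Set.toFinite _
    have hadjsx : G.Adj s x := by
      obtain ⟨p⟩ := hr
      cases p with
      | nil => exact absurd rfl hxs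
      | @cons _ y _ h q =>
        have hy : y ∈ c.supp := aux_mem_supp_of_adj hsc h
        rw [← hsupp] at hy
        rcases hy with rfl | rfl
        · exact absurd rfl h.ne
        · exact h
    have hns : G.neighborSet s \ T = {x} := by
      ext w
      constructor
      · rintro ⟨hw1, hw2⟩
        have hwc : w ∈ c.supp := aux_mem_supp_of_adj hsc hw1
        rw [← hsupp] at hwc
        rcases hwc with rfl | rfl
        · exact absurd rfl hw1.ne
        · rfl
      · rintro rfl
        exact ⟨hadjsx, hxT⟩
    exact hxT (hT s hsT x hns)
end

section
/- For a graph G = (V,E), every power dominating set of G is a dominating set of G (equivalently, the domination polynomial equals the power domination polynomial) if and only if for every non-isolated vertex u ∈ V there exists a neighbor v of u with N[v] ⊆ N[u]. -/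
open Finset Polynomial

lemma mem_cn {V : Type*} (G : SimpleGraph V) (S : Set V) (z : V) :
    z ∈ G.closedNbhd S ↔ z ∈ S ∨ ∃ u ∈ S, G.Adj u z := Iff.rfl

lemma mem_cn_singleton {V : Type*} (G : SimpleGraph V) (u z : V) :
    z ∈ G.closedNbhd {u} ↔ z = u ∨ G.Adj u z := by
  simp [SimpleGraph.closedNbhd]

/-- Key "blocking" lemma: if `a,b` are adjacent with `N[b] ⊆ N[a]`, `a ∉ T`, then no
vertex of `T` can force `b`. -/
lemma pairHelper {V : Type*} (G : SimpleGraph V) {T : Set V} {a b v : V}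
    (hab : G.Adj a b) (hN : G.closedNbhd {b} ⊆ G.closedNbhd {a})
    (haT : a ∉ T) (hv : v ∈ T) (h1 : G.neighborSet v \ T = {b}) : False := by
  have hvb : G.Adj v b := by
    have hb : b ∈ G.neighborSet v \ T := by rw [h1]; exact Set.mem_singleton b
    exact hb.1
  have hva : v ∈ G.closedNbhd {a} :=
    hN ((mem_cn_singleton G b v).2 (Or.inr hvb.symm))
  rcases (mem_cn_singleton G a v).1 hva with h | h
  · exact haT (h ▸ hv)
  · have ha : a ∈ G.neighborSet v \ T := ⟨h.symm, haT⟩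
    rw [h1] at ha
    exact hab.ne (Set.mem_singleton_iff.1 ha)

/-- Under the neighbor condition, outside any non-full closed neighborhood one can find
adjacent true twins. -/
lemma exists_twins {V : Type*} [Fintype V] (G : SimpleGraph V)
    (h : ∀ u : V, (∃ w, G.Adj u w) →
      ∃ v, G.Adj u v ∧ G.closedNbhd {v} ⊆ G.closedNbhd {u})
    (S : Set V) {w : V} (hw : w ∉ G.closedNbhd S) (hwi : ∃ x, G.Adj w x) :
    ∃ a b : V, G.Adj a b ∧ G.closedNbhd {a} = G.closedNbhd {b} ∧
      a ∉ G.closedNbhd S ∧ b ∉ G.closedNbhd S := by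
  classical
  let next : {u : V // ∃ x, G.Adj u x} → {u : V // ∃ x, G.Adj u x} :=
    fun p => ⟨(h p.1 p.2).choose, ⟨p.1, ((h p.1 p.2).choose_spec.1).symm⟩⟩
  let seq : ℕ → {u : V // ∃ x, G.Adj u x} := fun n => next^[n] ⟨w, hwi⟩
  have hseq0 : (seq 0).1 = w := rfl
  have hstep : ∀ n, G.Adj (seq n).1 (seq (n+1)).1 ∧
      G.closedNbhd {(seq (n+1)).1} ⊆ G.closedNbhd {(seq n).1} := by
    intro n
    have hit : seq (n+1) = next (seq n) := Function.iterate_succ_apply' next n _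
    rw [hit]
    exact ⟨(h (seq n).1 (seq n).2).choose_spec.1,
      (h (seq n).1 (seq n).2).choose_spec.2⟩
  have hchain : ∀ m n, m ≤ n →
      G.closedNbhd {(seq n).1} ⊆ G.closedNbhd {(seq m).1} := by
    intro m n hmn
    induction n with
    | zero => rw [Nat.le_zero.1 hmn]
    | succ k ih =>
      rcases Nat.lt_or_ge m (k+1) with h' | h'
      · exact (hstep k).2.trans (ih (Nat.lt_succ_iff.1 h'))
      · rw [Nat.le_antisymm hmn h']
  have hnotin : ∀ n, (seq n).1 ∉ G.closedNbhd S := by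
    intro n hn
    obtain ⟨s, hs, hsmem⟩ : ∃ s ∈ S, s ∈ G.closedNbhd {(seq n).1} := by
      rcases (mem_cn G S _).1 hn with hn' | ⟨s, hs, hadj⟩
      · exact ⟨_, hn', (mem_cn_singleton _ _ _).2 (Or.inl rfl)⟩
      · exact ⟨s, hs, (mem_cn_singleton _ _ _).2 (Or.inr hadj.symm)⟩
    have hsw := hchain 0 n (Nat.zero_le n) hsmem
    rw [hseq0] at hsw
    rcases (mem_cn_singleton G w s).1 hsw with h' | h'
    · exact hw ((mem_cn G S w).2 (Or.inl (h' ▸ hs)))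
    · exact hw ((mem_cn G S w).2 (Or.inr ⟨s, hs, h'.symm⟩))
  obtain ⟨i, j, hij, hvij⟩ :=
    Finite.exists_ne_map_eq_of_infinite (fun n => (seq n).1)
  have key : ∀ i j : ℕ, i < j → (seq i).1 = (seq j).1 →
      ∃ a b : V, G.Adj a b ∧ G.closedNbhd {a} = G.closedNbhd {b} ∧
        a ∉ G.closedNbhd S ∧ b ∉ G.closedNbhd S := by
    intro i j hlt heq
    refine ⟨(seq i).1, (seq (i+1)).1, (hstep i).1, ?_, hnotin i, hnotin (i+1)⟩
    apply Set.Subset.antisymm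
    · have h1 := hchain (i+1) j hlt
      rw [← heq] at h1
      exact h1
    · exact (hstep i).2
  rcases hij.lt_or_gt with hlt | hlt
  · exact key i j hlt hvij
  · exact key j i hlt hvij.symm

theorem stmt11 {V : Type*} [Fintype V] (G : SimpleGraph V) :
    (∀ S : Set V, G.IsPowerDomSet S ↔ G.IsDomSet S) ↔
      (∀ u : V, (∃ w, G.Adj u w) →
        ∃ v, G.Adj u v ∧ G.closedNbhd {v} ⊆ G.closedNbhd {u}) := by
  constructor
  · -- forward: if PDS = DS then the neighbor condition holds
    intro H u hu
    by_contra hne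
    push_neg at hne
    set S : Set V := (G.closedNbhd {u})ᶜ with hSdef
    have hNS : G.closedNbhd S = ({u} : Set V)ᶜ := by
      ext z
      simp only [Set.mem_compl_iff, Set.mem_singleton_iff]
      constructor
      · intro hz
        rcases (mem_cn G S z).1 hz with hz' | ⟨s, hs, hsz⟩
        · intro h
          exact hz' ((mem_cn_singleton G u z).2 (Or.inl h))
        · intro h
          have : G.Adj s u := by rw [← h]; exact hsz
          exact hs ((mem_cn_singleton G u s).2 (Or.inr this.symm))
      · intro hz
        apply (mem_cn G S z).2
        by_cases hzS : z ∈ S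
        · exact Or.inl hzS
        · have hadj : G.Adj u z := by
            have hz2 : z ∈ G.closedNbhd {u} := not_not.1 hzS
            rcases (mem_cn_singleton G u z).1 hz2 with h | h
            · exact absurd h hz
            · exact h
          obtain ⟨t, ht, htu⟩ := Set.not_subset.1 (hne z hadj)
          rcases (mem_cn_singleton G z t).1 ht with h | h
          · exact absurd (h ▸ htu) hzS
          · exact Or.inr ⟨t, htu, h.symm⟩
    have hPD : G.IsPowerDomSet S := by
      intro T hT hTc
      by_cases huT : u ∈ T
      · apply Set.eq_univ_of_forall
        intro z
        by_cases hz : z = u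
        · exact hz ▸ huT
        · exact hT (by rw [hNS]; exact hz)
      · exfalso
        obtain ⟨x, hx⟩ := hu
        have hxT : x ∈ T := hT (by rw [hNS]; exact hx.ne')
        have hforce : G.neighborSet x \ T = {u} := by
          ext y
          simp only [Set.mem_diff, Set.mem_singleton_iff, SimpleGraph.mem_neighborSet]
          constructor
          · rintro ⟨-, hyT⟩
            by_contra hyu
            exact hyT (hT (by rw [hNS]; exact hyu))
          · rintro rfl
            exact ⟨hx.symm, huT⟩
        exact huT (hTc x hxT u hforce)
    have hDom := (H S).1 hPD
    have hu2 : u ∈ G.closedNbhd S := hDom ▸ Set.mem_univ u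
    rw [hNS] at hu2
    exact hu2 rfl
  · -- backward: the neighbor condition implies PDS = DS
    intro h S
    constructor
    · intro hS
      by_contra hND
      obtain ⟨w, hw⟩ : ∃ w, w ∉ G.closedNbhd S := by
        by_contra hc; push_neg at hc
        exact hND (Set.eq_univ_of_forall hc)
      by_cases hwi : ∃ x, G.Adj w x
      · obtain ⟨a, b, hab, hNab, haS, hbS⟩ := exists_twins G h S hw hwi
        have hTsub : G.closedNbhd S ⊆ ({a, b} : Set V)ᶜ := by
          intro z hz hzp
          rcases Set.mem_insert_iff.1 hzp with h' | h'
          · exact haS (h' ▸ hz)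
          · exact hbS ((Set.mem_singleton_iff.1 h') ▸ hz)
        have hTfc : G.ForceClosed (({a, b} : Set V)ᶜ) := by
          intro v hv y hy
          exfalso
          have hyT : y ∈ G.neighborSet v \ ({a, b} : Set V)ᶜ := by
            rw [hy]; exact Set.mem_singleton y
          have hyab : y ∈ ({a, b} : Set V) := not_not.1 hyT.2
          have hbT : b ∉ ({a, b} : Set V)ᶜ := fun hc => hc (Set.mem_insert_iff.2 (Or.inr rfl))
          have haT : a ∉ ({a, b} : Set V)ᶜ := fun hc => hc (Set.mem_insert a {b})
          rcases Set.mem_insert_iff.1 hyab with h' | h'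
          · subst h'
            exact pairHelper G hab.symm hNab.le hbT hv hy
          · rw [Set.mem_singleton_iff.1 h'] at hy
            exact pairHelper G hab hNab.ge haT hv hy
        have := hS (({a, b} : Set V)ᶜ) hTsub hTfc
        have haU : a ∈ ({a, b} : Set V)ᶜ := this ▸ Set.mem_univ a
        exact haU (Set.mem_insert a {b})
      · have hTfc : G.ForceClosed (({w} : Set V)ᶜ) := by
          intro v hv y hy
          exfalso
          have hyT : y ∈ G.neighborSet v \ ({w} : Set V)ᶜ := by
            rw [hy]; exact Set.mem_singleton y
          have hyw : y = w := not_not.1 hyT.2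
          exact hwi ⟨v, (hyw ▸ hyT.1 : G.Adj v w).symm⟩
        have hTsub : G.closedNbhd S ⊆ ({w} : Set V)ᶜ := by
          intro z hz hzw
          exact hw ((Set.mem_singleton_iff.1 hzw) ▸ hz)
        have := hS (({w} : Set V)ᶜ) hTsub hTfc
        have hwU : w ∈ ({w} : Set V)ᶜ := this ▸ Set.mem_univ w
        exact hwU rfl
    · intro hS T hT _
      exact Set.univ_subset_iff.1 (hS ▸ hT)
end

section
/- The only power dominating set of the empty graph on n vertices is the full vertex set; hence 𝒫(K̄ₙ;x) = xⁿ. Moreover, a graph G has exactly one distinct power domination root if and only if G is the empty graph K̄ₙ, in which case the only root is 0. -/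
open Finset Polynomial

/-! On the edgeless graph `N[S] = S` and every set is closed under forcing, so `V` is the only
power dominating set and `𝒫(K̄ₙ;x) = xⁿ`. For any `G`, `𝒫(G;x)` has no constant term and has
degree `n`, so `0` is a root. If `G` has an edge `uw`, then `V ∖ {w}` is dominating, hence power
dominating, so the coefficient of `xⁿ⁻¹` is nonzero. But over `ℂ` that coefficient is minus the
leading coefficient times the sum of the roots, which vanishes when `0` is the only root. -/

namespace SimpleGraph

variable {V : Type*}

theorem closedNbhd_bot (S : Set V) : (⊥ : SimpleGraph V).closedNbhd S = S := by
  simp [closedNbhd]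

theorem forceClosed_bot (T : Set V) : (⊥ : SimpleGraph V).ForceClosed T := by
  intro v _ w hw
  have hw' : w ∈ (⊥ : SimpleGraph V).neighborSet v \ T := hw ▸ rfl
  simp at hw'

theorem IsDomSet.isPowerDomSet {G : SimpleGraph V} {S : Set V} (hS : G.IsDomSet S) :
    G.IsPowerDomSet S := fun _ hST _ => Set.eq_univ_of_univ_subset (hS ▸ hST)

theorem isDomSet_univ (G : SimpleGraph V) : G.IsDomSet Set.univ :=
  Set.eq_univ_of_univ_subset Set.subset_union_left

theorem isDomSet_compl_singleton {G : SimpleGraph V} {u w : V} (h : G.Adj u w) :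
    G.IsDomSet {w}ᶜ := by
  refine Set.eq_univ_of_forall fun v => ?_
  by_cases hv : v = w
  · exact Or.inr ⟨u, by simpa [hv] using h.ne, hv ▸ h⟩
  · exact Or.inl hv

theorem isPowerDomSet_bot_iff (S : Set V) :
    (⊥ : SimpleGraph V).IsPowerDomSet S ↔ S = Set.univ :=
  ⟨fun h => h S (closedNbhd_bot S).le (forceClosed_bot S),
    fun h => IsDomSet.isPowerDomSet ((closedNbhd_bot S).trans h)⟩

end SimpleGraph

namespace Polynomial

theorem nextCoeff_eq_zero_of_forall_mem_roots_eq_zero {K : Type*} [Field K] [IsAlgClosed K]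
    {p : K[X]} (h : ∀ r ∈ p.roots, r = 0) : p.nextCoeff = 0 := by
  rw [(IsAlgClosed.splits p).nextCoeff_eq_neg_sum_roots_mul_leadingCoeff,
    Multiset.sum_eq_zero h, mul_zero]

end Polynomial

open SimpleGraph

section PowerDominationPolynomial

variable {V : Type*} [Fintype V]

theorem pdCount_pos {G : SimpleGraph V} {S : Finset V} (hS : G.IsPowerDomSet S) :
    0 < pdCount G S.card :=
  have : Nonempty {T : Finset V // G.IsPowerDomSet T ∧ T.card = S.card} := ⟨⟨S, hS, rfl⟩⟩
  Nat.card_pos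

theorem pdCount_bot (i : ℕ) :
    pdCount (⊥ : SimpleGraph V) i = if i = Fintype.card V then 1 else 0 := by
  have hS (S : Finset V) : S = univ ∧ S.card = i ↔ S = univ ∧ Fintype.card V = i :=
    and_congr_right fun h => by rw [h, card_univ]
  simp only [pdCount, isPowerDomSet_bot_iff, coe_eq_univ, hS]
  split_ifs with h
  · simp [h.symm]
  · simp [Ne.symm h]

theorem coeff_pdPoly (G : SimpleGraph V) (j : ℕ) :
    (pdPoly G).coeff j = if j ∈ Icc 1 (Fintype.card V) then (pdCount G j : ℤ) else 0 := by
  simp only [pdPoly, finsetSum_coeff, coeff_C_mul, coeff_X_pow, mul_ite, mul_one, mul_zero,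
    sum_ite_eq]

theorem coeff_zero_pdPoly (G : SimpleGraph V) : (pdPoly G).coeff 0 = 0 := by
  simp [coeff_pdPoly]

variable [Nonempty V]

theorem pdPoly_bot : pdPoly (⊥ : SimpleGraph V) = X ^ Fintype.card V := by
  ext j
  have := Fintype.card_pos (α := V)
  rw [coeff_pdPoly, pdCount_bot, coeff_X_pow]
  split_ifs <;> simp_all

theorem natDegree_pdPoly (G : SimpleGraph V) : (pdPoly G).natDegree = Fintype.card V := by
  refine natDegree_eq_of_le_of_coeff_ne_zero ?_ ?_
  · refine natDegree_le_iff_coeff_eq_zero.mpr fun j hj => ?_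
    rw [coeff_pdPoly, if_neg (by rw [mem_Icc]; omega)]
  · have hpos := pdCount_pos (S := univ) (by simpa using (isDomSet_univ G).isPowerDomSet)
    rw [card_univ] at hpos
    rw [coeff_pdPoly, if_pos (mem_Icc.mpr ⟨Fintype.card_pos, le_rfl⟩)]
    exact Nat.cast_ne_zero.mpr hpos.ne'

theorem pdPoly_ne_zero (G : SimpleGraph V) : pdPoly G ≠ 0 := fun h =>
  Fintype.card_ne_zero ((natDegree_pdPoly G).symm.trans (h ▸ natDegree_zero))

theorem nextCoeff_pdPoly_ne_zero {G : SimpleGraph V} (hG : G ≠ ⊥) :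
    (pdPoly G).nextCoeff ≠ 0 := by
  classical
  obtain ⟨u, w, huw⟩ := ne_bot_iff_exists_adj.mp hG
  have : Nontrivial V := ⟨⟨u, w, huw.ne⟩⟩
  have hn := Fintype.one_lt_card (α := V)
  have hS : G.IsPowerDomSet (({w}ᶜ : Finset V) : Set V) := by
    simpa using (isDomSet_compl_singleton huw).isPowerDomSet
  have hpos := pdCount_pos hS
  rw [card_compl, card_singleton] at hpos
  have hdeg := natDegree_pdPoly G
  rw [nextCoeff_of_natDegree_pos (by omega), hdeg, coeff_pdPoly,
    if_pos (mem_Icc.mpr ⟨by omega, by omega⟩)]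
  exact Nat.cast_ne_zero.mpr hpos.ne'

variable {K : Type*} [Field K]

theorem roots_toFinset_map_pdPoly_bot [DecidableEq K] :
    ((pdPoly (⊥ : SimpleGraph V)).map (Int.castRingHom K)).roots.toFinset = {0} := by
  rw [pdPoly_bot, Polynomial.map_pow, map_X, roots_X_pow,
    Multiset.toFinset_nsmul _ _ Fintype.card_ne_zero, Multiset.toFinset_singleton]

theorem zero_mem_roots_map_pdPoly [CharZero K] (G : SimpleGraph V) :
    (0 : K) ∈ ((pdPoly G).map (Int.castRingHom K)).roots := by
  rw [mem_roots_map_of_injective Int.cast_injective (pdPoly_ne_zero G), eval₂_at_zero,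
    coeff_zero_pdPoly, map_zero]

theorem eq_bot_of_card_roots_toFinset_map_pdPoly_eq_one [IsAlgClosed K] [CharZero K]
    [DecidableEq K] {G : SimpleGraph V}
    (hcard : ((pdPoly G).map (Int.castRingHom K)).roots.toFinset.card = 1) : G = ⊥ := by
  by_contra hG
  have h0 := Multiset.mem_toFinset.mpr (zero_mem_roots_map_pdPoly (K := K) G)
  have hroots : ∀ r ∈ ((pdPoly G).map (Int.castRingHom K)).roots, r = 0 := fun r hr =>
    card_le_one.mp hcard.le r (Multiset.mem_toFinset.mpr hr) 0 h0
  apply nextCoeff_pdPoly_ne_zero hG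
  simpa [nextCoeff_map (Int.castRingHom K).injective_int] using
    nextCoeff_eq_zero_of_forall_mem_roots_eq_zero hroots

end PowerDominationPolynomial

theorem stmt16 {V : Type*} [Fintype V] [Nonempty V] (G : SimpleGraph V) :
    ((∀ S : Finset V, (⊥ : SimpleGraph V).IsPowerDomSet ↑S ↔ S = Finset.univ) ∧
      pdPoly (⊥ : SimpleGraph V) = Polynomial.X ^ (Fintype.card V)) ∧
    ((((pdPoly G).map (Int.castRingHom ℂ)).roots.toFinset.card = 1) ↔ G = ⊥) ∧
    (G = ⊥ → ((pdPoly G).map (Int.castRingHom ℂ)).roots.toFinset = {0}) := by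
  refine ⟨⟨fun S => (isPowerDomSet_bot_iff _).trans coe_eq_univ, pdPoly_bot⟩,
    ⟨eq_bot_of_card_roots_toFinset_map_pdPoly_eq_one, ?_⟩, ?_⟩
  · rintro rfl
    rw [roots_toFinset_map_pdPoly_bot, card_singleton]
  · rintro rfl
    exact roots_toFinset_map_pdPoly_bot
end
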